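/- arXiv:cs/0106041 — 2 statements merged into one kernel-verified Lean document; each statement's English description precedes it below -/
import Mathlib

section
/- Let G be a finite simple graph obtained from H by contracting an edge e = {u,v} of H, and let c be a Hamiltonian cycle of G such that, at the merged vertex, c uses exactly one edge arising from a u-edge of H and exactly one edge arising from a v-edge of H. Then inserting e back yields a Hamiltonian cycle of H. -/
/-!
Cutting the Hamiltonian cycle of `H/e` open at the merged vertex `w` (and reversing it if needed)
leaves a Hamiltonian path `z₁ ⋯ z₂` of `H/e - w`. It avoids `u` and `v`, so it is already a path
of `H`, and closing it up as `u, z₁ ⋯ z₂, v, u` visits every vertex of `H` exactly once.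
-/

/-- The graph obtained from `H` by contracting the edge `{u, v}`. -/
def SimpleGraph.contractEdge {V : Type*} (H : SimpleGraph V) (u v : V) :
    SimpleGraph {z : V // z ≠ v} :=
  SimpleGraph.fromRel (fun a b => H.Adj ↑a ↑b ∨ (↑a = u ∧ H.Adj v ↑b))

/-- The quotient map identifying `v` with `u`. -/
def contractMap {V : Type*} [DecidableEq V] (u v : V) (huv : u ≠ v) :
    V → {z : V // z ≠ v} :=
  fun z => if h : z = v then ⟨u, huv⟩ else ⟨z, h⟩

namespace SimpleGraph.Walk

variable {V : Type*} {G : SimpleGraph V}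

lemma exists_eq_cons_concat {w : V} (c : G.Walk w w) (hc : ¬ c.Nil) :
    ∃ (x y : V) (hx : G.Adj w x) (hy : G.Adj y w) (p : G.Walk x y),
      c = cons hx (p.concat hy) := by
  cases c with
  | nil => exact absurd Nil.nil hc
  | cons hx q =>
    cases q with
    | nil => exact absurd rfl hx.ne
    | cons h' q' =>
      obtain ⟨y, p, hy, hq⟩ := exists_cons_eq_concat h' q'
      exact ⟨_, y, hx, hy, p, by rw [hq]⟩

lemma isHamiltonianCycle_cons_iff [DecidableEq V] {u v : V} (h : G.Adj u v) (q : G.Walk v u) :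
    (cons h q).IsHamiltonianCycle ↔ q.IsHamiltonian ∧ s(u, v) ∉ q.edges := by
  rw [isHamiltonianCycle_iff_isCycle_and_support_count_tail_eq_one, cons_isCycle_iff,
    support_cons, List.tail_cons]
  exact ⟨fun ⟨⟨_, he⟩, hq⟩ ↦ ⟨hq, he⟩, fun ⟨hq, he⟩ ↦ ⟨⟨hq.isPath, he⟩, hq⟩⟩

lemma isHamiltonian_concat_iff [DecidableEq V] {a b w : V} (p : G.Walk a b) (h : G.Adj b w) :
    (p.concat h).IsHamiltonian ↔ p.IsPath ∧ ∀ t, t ∈ p.support ↔ t ≠ w := by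
  constructor
  · intro hp
    obtain ⟨hpath, hw⟩ := (concat_isPath_iff h).1 hp.isPath
    refine ⟨hpath, fun t ↦ ⟨fun ht htw ↦ hw (htw ▸ ht), fun htw ↦ ?_⟩⟩
    simpa [htw] using hp.mem_support t
  · rintro ⟨hpath, hsupp⟩
    refine (hpath.concat (fun hw ↦ (hsupp w).1 hw rfl) h).isHamiltonian_of_mem fun t ↦ ?_
    by_cases htw : t = w <;> simp [htw, hsupp]

lemma filter_mem_edges_cons_concat [DecidableEq V] {w x y : V} (hx : G.Adj w x)
    (hy : G.Adj y w) (p : G.Walk x y) (hw : w ∉ p.support) :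
    (cons hx (p.concat hy)).edges.filter (fun e ↦ w ∈ e) = [s(w, x), s(y, w)] := by
  have : p.edges.filter (fun e ↦ w ∈ e) = [] := List.filter_eq_nil_iff.2 fun e he hwe ↦
    hw (p.mem_support_of_mem_edges he (by simpa using hwe))
  simp [List.filter_append, this]

lemma isHamiltonianCycle_cons_concat_concat [DecidableEq V] {a b u v : V} (p : G.Walk a b)
    (hp : p.IsPath) (hsupp : ∀ t, t ∈ p.support ↔ t ≠ u ∧ t ≠ v) (ha : G.Adj u a) (hb : G.Adj b v)
    (hvu : G.Adj v u) : (cons ha ((p.concat hb).concat hvu)).IsHamiltonianCycle := by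
  have hav : a ≠ v := ((hsupp a).1 p.start_mem_support).2
  have hu : u ∉ p.support := fun hu ↦ ((hsupp u).1 hu).1 rfl
  refine (isHamiltonianCycle_cons_iff _ _).2 ⟨(isHamiltonian_concat_iff _ _).2 ⟨?_, ?_⟩, ?_⟩
  · exact hp.concat (fun hv ↦ ((hsupp v).1 hv).2 rfl) hb
  · intro t
    by_cases htv : t = v
    · simp [htv, hvu.ne]
    · simp [htv, hsupp]
  · simp only [edges_concat, List.concat_eq_append, List.mem_append, List.mem_singleton,
      Sym2.eq_iff, not_or]
    refine ⟨⟨fun he ↦ hu (p.fst_mem_support_of_mem_edges he), ?_⟩, ?_⟩ <;>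
      simp [hvu.ne', hav]

end SimpleGraph.Walk

namespace SimpleGraph

variable {V : Type*} {H : SimpleGraph V} {u v : V}

lemma adj_of_contractEdge_adj {a b : {z : V // z ≠ v}} (h : (H.contractEdge u v).Adj a b)
    (ha : (a : V) ≠ u) (hb : (b : V) ≠ u) : H.Adj a b := by
  rw [contractEdge, fromRel_adj] at h
  rcases h.2 with (h | ⟨h, -⟩) | (h | ⟨h, -⟩)
  · exact h
  · exact absurd h ha
  · exact h.symm
  · exact absurd h hb

lemma Walk.exists_lift_of_contractEdge {a b : {z : V // z ≠ v}}
    (p : (H.contractEdge u v).Walk a b) (hp : ∀ s ∈ p.support, (s : V) ≠ u) :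
    ∃ q : H.Walk a b, q.support = p.support.map Subtype.val ∧
      q.edges = p.edges.map (Sym2.map Subtype.val) := by
  induction p with
  | nil => exact ⟨nil, by simp, by simp⟩
  | cons h p ih =>
    obtain ⟨q, hqs, hqe⟩ := ih fun s hs ↦ hp s (List.mem_cons_of_mem _ hs)
    refine ⟨cons (adj_of_contractEdge_adj h (hp _ (by simp)) (hp _ (by simp))) q, ?_, ?_⟩ <;>
      simp [hqs, hqe]

end SimpleGraph

section contractMap

variable {V : Type*} [DecidableEq V] {u v : V} (huv : u ≠ v)

@[simp]
lemma contractMap_coe (a : {z : V // z ≠ v}) : contractMap u v huv a = a := by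
  simp [contractMap, a.prop]

@[simp]
lemma contractMap_left : contractMap u v huv u = ⟨u, huv⟩ := by
  simp [contractMap, huv]

@[simp]
lemma contractMap_right : contractMap u v huv v = ⟨u, huv⟩ := by
  simp [contractMap]

lemma sym2Map_contractMap_comp_sym2Map_coe :
    Sym2.map (contractMap u v huv) ∘ Sym2.map Subtype.val = id := by
  rw [← Sym2.map_comp, show contractMap u v huv ∘ Subtype.val = id from
    funext (contractMap_coe huv), Sym2.map_id]

end contractMap

open SimpleGraph Walk in
theorem exists_isHamiltonianCycle_of_contractEdge_path {V : Type*} [DecidableEq V]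
    {H : SimpleGraph V} {u v : V} (he : H.Adj u v) {z₁ z₂ : {z : V // z ≠ v}}
    (p : (H.contractEdge u v).Walk z₁ z₂) (hp : p.IsPath)
    (hsupp : ∀ a, a ∈ p.support ↔ a ≠ ⟨u, he.ne⟩) (hz₁ : H.Adj u z₁) (hz₂ : H.Adj v z₂) :
    ∃ cH : H.Walk u u, cH.IsHamiltonianCycle ∧ s(u, v) ∈ cH.edges ∧
      ((cH.edges.erase s(u, v)).map (Sym2.map (contractMap u v he.ne))).Perm
        (s(⟨u, he.ne⟩, z₁) :: (p.edges ++ [s(z₂, ⟨u, he.ne⟩)])) := by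
  have hpu : ∀ s ∈ p.support, (s : V) ≠ u := fun s hs h ↦ (hsupp s).1 hs (Subtype.ext h)
  obtain ⟨q, hqs, hqe⟩ := p.exists_lift_of_contractEdge hpu
  refine ⟨cons hz₁ ((q.concat hz₂.symm).concat he.symm), ?_, by simp, ?_⟩
  · refine isHamiltonianCycle_cons_concat_concat q ?_ (fun t ↦ ?_) hz₁ hz₂.symm he.symm
    · rw [isPath_def, hqs]
      exact hp.support_nodup.map Subtype.val_injective
    · simp [hqs, hsupp, and_comm]
  · have herase : ((cons hz₁ ((q.concat hz₂.symm).concat he.symm)).edges.erase s(u, v)).Perm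
        (s(u, ↑z₁) :: (q.edges ++ [s(↑z₂, v)])) := by
      simpa [Sym2.eq_swap] using (List.perm_append_singleton s(v, u)
        (s(u, ↑z₁) :: (q.edges ++ [s(↑z₂, v)]))).erase s(u, v)
    refine (herase.map _).trans (List.Perm.of_eq ?_)
    simp [hqe, sym2Map_contractMap_comp_sym2Map_coe]

open SimpleGraph Walk in
theorem hamiltonianCycle_of_contractEdge_hamiltonianCycle_general {V : Type*}
    [DecidableEq V] (H : SimpleGraph V)
    (u v : V) (he : H.Adj u v)
    (c : (H.contractEdge u v).Walk ⟨u, he.ne⟩ ⟨u, he.ne⟩)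
    (hc : c.IsHamiltonianCycle)
    -- at the merged vertex, `c` uses exactly one edge arising from a `u`-edge of `H`
    -- and exactly one edge arising from a `v`-edge of `H`
    (z₁ z₂ : {z : V // z ≠ v})
    (hz₁ : H.Adj u ↑z₁) (hz₂ : H.Adj v ↑z₂)
    (hsplit : (c.edges.filter (fun e' => (⟨u, he.ne⟩ : {z : V // z ≠ v}) ∈ e')).Perm
      [s((⟨u, he.ne⟩ : {z : V // z ≠ v}), z₁), s((⟨u, he.ne⟩ : {z : V // z ≠ v}), z₂)]) :
    ∃ cH : H.Walk u u, cH.IsHamiltonianCycle ∧ s(u, v) ∈ cH.edges ∧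
      ((cH.edges.erase s(u, v)).map (Sym2.map (contractMap u v he.ne))).Perm c.edges := by
  obtain ⟨x, y, hx, hy, p, rfl⟩ := c.exists_eq_cons_concat hc.isCycle.not_nil
  obtain ⟨hp, hsupp⟩ :=
    (isHamiltonian_concat_iff p hy).1 ((isHamiltonianCycle_cons_iff hx _).1 hc).1
  rw [filter_mem_edges_cons_concat hx hy p fun h ↦ (hsupp _).1 h rfl, Sym2.eq_swap (a := y),
    List.perm_comm, List.perm_pair] at hsplit
  simp only [List.cons.injEq, Sym2.congr_right, and_true] at hsplit
  rcases hsplit with ⟨rfl, rfl⟩ | ⟨rfl, rfl⟩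
  · simpa using exists_isHamiltonianCycle_of_contractEdge_path he p hp hsupp hz₁ hz₂
  · obtain ⟨cH, hcH, huv, hperm⟩ := exists_isHamiltonianCycle_of_contractEdge_path he p.reverse
      hp.reverse (by simpa using hsupp) hz₁ hz₂
    refine ⟨cH, hcH, huv, hperm.trans ((List.Perm.of_eq ?_).trans (List.reverse_perm _))⟩
    simp [Sym2.eq_swap]

theorem hamiltonianCycle_of_contractEdge_hamiltonianCycle {V : Type*} [Fintype V]
    [DecidableEq V] (H : SimpleGraph V) (hn : 4 ≤ Fintype.card V)
    (u v : V) (he : H.Adj u v)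
    (c : (H.contractEdge u v).Walk ⟨u, he.ne⟩ ⟨u, he.ne⟩)
    (hc : c.IsHamiltonianCycle)
    -- at the merged vertex, `c` uses exactly one edge arising from a `u`-edge of `H`
    -- and exactly one edge arising from a `v`-edge of `H`
    (z₁ z₂ : {z : V // z ≠ v}) (hz : z₁ ≠ z₂)
    (hz₁ : H.Adj u ↑z₁) (hz₂ : H.Adj v ↑z₂)
    (hsplit : (c.edges.filter (fun e' => (⟨u, he.ne⟩ : {z : V // z ≠ v}) ∈ e')).Perm
      [s((⟨u, he.ne⟩ : {z : V // z ≠ v}), z₁), s((⟨u, he.ne⟩ : {z : V // z ≠ v}), z₂)]) :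
    ∃ cH : H.Walk u u, cH.IsHamiltonianCycle ∧ s(u, v) ∈ cH.edges ∧
      ((cH.edges.erase s(u, v)).map (Sym2.map (contractMap u v he.ne))).Perm c.edges :=
  hamiltonianCycle_of_contractEdge_hamiltonianCycle_general H u v he c hc z₁ z₂ hz₁ hz₂ hsplit
end

section
/- Let G and H be finite simple graphs with n = |V(G)| = |V(H)|. If φ : G ≃g H is an isomorphism with φ(x) = y for a vertex x of G and a vertex y of H, then the graphs G' and H' are isomorphic, where G' (resp. H') is obtained from G (resp. H) by deleting x (resp. y) and attaching to each former neighbor of x (resp. y) a new clique of n−1 fresh vertices joined completely to that neighbor. -/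
/-- The graph obtained from `G` by deleting the vertex `x` and attaching to each former
neighbor `x'` of `x` a fresh clique of `n - 1` new vertices, pairwise adjacent and each
adjacent to `x'` (and to nothing else). -/
def attachAll {V : Type*} (G : SimpleGraph V) (x : V) (n : ℕ) :
    SimpleGraph ({z : V // z ≠ x} ⊕ (G.neighborSet x × Fin (n - 1))) where
  Adj a b :=
    match a, b with
    | .inl a, .inl b => G.Adj ↑a ↑b
    | .inl a, .inr (w, _) => (↑a : V) = ↑w
    | .inr (w, _), .inl b => (↑b : V) = ↑w
    | .inr (w, i), .inr (w', j) => w = w' ∧ i ≠ j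
  symm := by
    refine ⟨?_⟩
    rintro (a | ⟨w, i⟩) (b | ⟨w', j⟩) h
    · exact G.adj_symm h
    · exact h
    · exact h
    · exact ⟨h.1.symm, h.2.symm⟩
  loopless := by
    refine ⟨?_⟩
    rintro (a | ⟨w, i⟩) h
    · exact G.irrefl h
    · exact h.2 rfl

theorem attachAll_iso_of_iso {V W : Type*} [Fintype V] [Fintype W] (n : ℕ)
    (G : SimpleGraph V) (H : SimpleGraph W)
    (hV : Fintype.card V = n) (hW : Fintype.card W = n)
    (φ : G ≃g H) (x : V) (y : W) (hxy : φ x = y) :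
    Nonempty (attachAll G x n ≃g attachAll H y n) := by
  subst hxy
  have hsub : ∀ z : V, z ≠ x ↔ φ z ≠ φ x := by
    intro z; constructor
    · exact fun h h' => h (φ.injective h')
    · exact fun h h' => h (by rw [h'])
  have hnb : ∀ z : V, z ∈ G.neighborSet x ↔ φ z ∈ H.neighborSet (φ x) := by
    intro z
    simp [SimpleGraph.mem_neighborSet, φ.map_adj_iff]
  refine ⟨⟨Equiv.sumCongr (φ.toEquiv.subtypeEquiv hsub)
    (Equiv.prodCongr (φ.toEquiv.subtypeEquiv hnb) (Equiv.refl _)), ?_⟩⟩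
  rintro (a | ⟨w, i⟩) (b | ⟨w', j⟩) <;>
    simp only [attachAll, Equiv.sumCongr_apply, Sum.map_inl, Sum.map_inr, Equiv.prodCongr_apply,
      Prod.map, Equiv.subtypeEquiv_apply, Equiv.refl_apply]
  · exact φ.map_adj_iff
  · exact φ.injective.eq_iff
  · exact φ.injective.eq_iff
  · simp [Subtype.ext_iff, φ.injective.eq_iff]
end
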